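/- (ZFC-provable core of Theorem 3.5.) Let t ≥ 1, k ≥ 2, let E ⊂ ℕ be finite with |E| = p ≥ 2 and e₀ = min(E), let f : D → ℕ with E^k ⊆ D ⊂ ℕ^k be regressively regular over E, let γ : E^k → ℤ be arbitrary, and let ρ : E^k → ℕ be t-log bounded over E^k with ρ(x) > min(x) for all x ∈ E^k_2. Let H_p = Δ[f]E^k_0 ∪ Δ[f]E^k_1 ∪ Δ[f]E^k_2. Then: (i) Δ[f]E^k_1 = ∅; (ii) H_p has a nonempty subset summing to 0 if and only if some pair (A', B'), not both empty, with A' ⊆ Δ[f]E^k_0 and B' ⊆ {y ∈ Δ[f]E^k_2 : y < e₀ · k^k}, satisfies ∑A' + ∑B' = 0; and (iii) the number of such pairs (A', B') is at most 2^{k^k} · (p^k)^t. -/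

import Mathlib

/-! Applying regressive regularity to the order class of `x` itself shows `f x < min E` or
`min x ≤ f x`, so `E^k_1` is empty. On `E^k_0` the map `f` is constant on order classes, of which
there are at most `k^k`; hence `Δ[f]E^k_0` consists of at most `k^k` distinct integers in
`[-e₀, 0)`, while `Δ[f]E^k_2` is positive. The negative part of a zero-sum set therefore sums to
more than `-e₀ k^k`, which bounds each of its positive elements. Those small positive elements
are among the at most `t log₂ p^k` values counted by `t`-log boundedness, which yields the bound
`2^(k^k) (p^k)^t` on the number of pairs. -/

/-- The minimum coordinate of a tuple `x : Fin k → ℕ`. -/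
noncomputable def minT {k : ℕ} (x : Fin k → ℕ) : ℕ := sInf (Set.range x)

/-- The cube `E^k`, viewed as a set of `k`-tuples of naturals. -/
def cube (k : ℕ) (E : Finset ℕ) : Set (Fin k → ℕ) := {x | ∀ i, x i ∈ E}

/-- Two `k`-tuples of naturals are *order equivalent* if their coordinates compare
(`<` and `=`) in exactly the same positions. -/
def OrdEquiv {k : ℕ} (x y : Fin k → ℕ) : Prop :=
  ∀ i j : Fin k, (x i < x j ↔ y i < y j) ∧ (x i = x j ↔ y i = y j)

/-- `f` is regressively regular over `E`: for each order-type equivalence class of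
`k`-tuples of `E^k`, either `f` is constant on the class with value `< min E`, or
`f x ≥ min x` for every `x` of the class. -/
def RegressivelyRegular {k : ℕ} (f : (Fin k → ℕ) → ℕ) (E : Finset ℕ) : Prop :=
  ∀ x ∈ cube k E,
    (∀ y ∈ cube k E, OrdEquiv x y → f y = f x ∧ f y < sInf (E : Set ℕ)) ∨
    (∀ y ∈ cube k E, OrdEquiv x y → minT y ≤ f y)

/-- The block `E^k_0 = {x ∈ E^k : f(x) < min E}`. -/
noncomputable def Eblock0 (k : ℕ) (f : (Fin k → ℕ) → ℕ) (E : Finset ℕ) : Set (Fin k → ℕ) :=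
  {x ∈ cube k E | f x < sInf (E : Set ℕ)}

/-- The block `E^k_1 = {x ∈ E^k : min E ≤ f(x) < min x}`. -/
noncomputable def Eblock1 (k : ℕ) (f : (Fin k → ℕ) → ℕ) (E : Finset ℕ) : Set (Fin k → ℕ) :=
  {x ∈ cube k E | sInf (E : Set ℕ) ≤ f x ∧ f x < minT x}

/-- The block `E^k_2 = {x ∈ E^k : min x ≤ f(x)}`. -/
noncomputable def Eblock2 (k : ℕ) (f : (Fin k → ℕ) → ℕ) (E : Finset ℕ) : Set (Fin k → ℕ) :=
  {x ∈ cube k E | minT x ≤ f x}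

/-- The set of integers `Δ[f]E^k_0 = {f(x) − min E : x ∈ E^k_0}`. -/
noncomputable def Delta0 (k : ℕ) (f : (Fin k → ℕ) → ℕ) (E : Finset ℕ) : Set ℤ :=
  {z | ∃ x ∈ Eblock0 k f E, z = (f x : ℤ) - ((sInf (E : Set ℕ) : ℕ) : ℤ)}

/-- The set of integers `Δ[f]E^k_2 = {ρ(x) − min(x) : x ∈ E^k_2}`. -/
noncomputable def Delta2 (k : ℕ) (ρ : (Fin k → ℕ) → ℕ) (f : (Fin k → ℕ) → ℕ)
    (E : Finset ℕ) : Set ℤ :=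
  {z | ∃ x ∈ Eblock2 k f E, z = (ρ x : ℤ) - (minT x : ℤ)}

/-- `ρ` is `t`-log bounded over `E^k` (`|E| = p`):
`|{ρ(x) − min(x) : 0 < ρ(x) − min(x) < e₀·k^k, x ∈ E^k}| ≤ t·log₂(p^k)` where `e₀ = min E`. -/
noncomputable def TLogBounded (t k : ℕ) (E : Finset ℕ) (ρ : (Fin k → ℕ) → ℕ) : Prop :=
  ({d : ℕ | ∃ x ∈ cube k E, ρ x - minT x = d ∧ 0 < d ∧
      d < sInf (E : Set ℕ) * k ^ k}.ncard : ℝ) ≤ (t : ℝ) * Real.logb 2 ((E.card : ℝ) ^ k)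

/-- The set of integers `Δ[f]E^k_1 = {γ(x) : x ∈ E^k_1}`. -/
noncomputable def Delta1 (k : ℕ) (γ : (Fin k → ℕ) → ℤ) (f : (Fin k → ℕ) → ℕ)
    (E : Finset ℕ) : Set ℤ :=
  {z | ∃ x ∈ Eblock1 k f E, γ x = z}

open Finset

section OrderType

variable {α : Type*} [LinearOrder α] {k : ℕ}

def orderRank (x : Fin k → α) (i : Fin k) : ℕ :=
  #{j | x j < x i}

lemma orderRank_le_orderRank {x : Fin k → α} {i j : Fin k} (h : x i ≤ x j) :
    orderRank x i ≤ orderRank x j :=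
  card_le_card fun a ha => by
    simp only [mem_filter, mem_univ, true_and] at ha ⊢
    exact ha.trans_le h

lemma orderRank_lt_orderRank {x : Fin k → α} {i j : Fin k} (h : x i < x j) :
    orderRank x i < orderRank x j := by
  refine card_lt_card ((ssubset_iff_of_subset fun a ha => ?_).2 ⟨i, ?_, ?_⟩) <;>
    simp_all only [mem_filter, mem_univ, true_and, lt_irrefl, not_false_eq_true]
  exact ha.trans h

lemma orderRank_lt_orderRank_iff {x : Fin k → α} {i j : Fin k} :
    orderRank x i < orderRank x j ↔ x i < x j :=
  ⟨fun h => lt_of_not_ge fun h' => (orderRank_le_orderRank h').not_gt h, orderRank_lt_orderRank⟩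

lemma orderRank_lt (x : Fin k → α) (i : Fin k) : orderRank x i < k := by
  simpa [orderRank] using card_lt_card (filter_ssubset.2 ⟨i, mem_univ i, lt_irrefl (x i)⟩)

def orderType (x : Fin k → α) : Fin k → Fin k :=
  fun i => ⟨orderRank x i, orderRank_lt x i⟩

end OrderType

lemma OrdEquiv.refl {k : ℕ} (x : Fin k → ℕ) : OrdEquiv x x :=
  fun _ _ => ⟨Iff.rfl, Iff.rfl⟩

lemma ordEquiv_of_orderType_eq {k : ℕ} {x y : Fin k → ℕ} (h : orderType x = orderType y) :
    OrdEquiv x y := by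
  have hrank : orderRank x = orderRank y := funext fun i => congrArg Fin.val (congrFun h i)
  have hlt : ∀ i j, x i < x j ↔ y i < y j := fun i j => by
    rw [← orderRank_lt_orderRank_iff, hrank, orderRank_lt_orderRank_iff]
  intro i j
  simp only [hlt, le_antisymm_iff, ← not_lt, and_self]

lemma minT_mem {k : ℕ} (hk : 0 < k) {E : Finset ℕ} {x : Fin k → ℕ} (hx : x ∈ cube k E) :
    minT x ∈ E := by
  have hne : (Set.range x).Nonempty := Set.range_nonempty_iff_nonempty.2 ⟨⟨0, hk⟩⟩
  obtain ⟨i, hi⟩ := Nat.sInf_mem hne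
  rw [minT, ← hi]
  exact hx i

namespace RegressivelyRegular

variable {k : ℕ} {f : (Fin k → ℕ) → ℕ} {E : Finset ℕ}

lemma lt_sInf_or_minT_le (hrr : RegressivelyRegular f E) {x : Fin k → ℕ} (hx : x ∈ cube k E) :
    f x < sInf (E : Set ℕ) ∨ minT x ≤ f x :=
  (hrr x hx).imp (fun h => (h x hx (.refl x)).2) (fun h => h x hx (.refl x))

lemma eblock1_eq_empty (hrr : RegressivelyRegular f E) : Eblock1 k f E = ∅ :=
  Set.eq_empty_of_forall_notMem fun x ⟨hx, hlo, hhi⟩ => by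
    rcases hrr.lt_sInf_or_minT_le hx with h | h <;> omega

lemma delta1_eq_empty (hrr : RegressivelyRegular f E) (γ : (Fin k → ℕ) → ℤ) :
    Delta1 k γ f E = ∅ := by
  simp [Delta1, hrr.eblock1_eq_empty]

lemma apply_eq_of_ordEquiv (hrr : RegressivelyRegular f E) (hk : 0 < k) {x y : Fin k → ℕ}
    (hx : x ∈ Eblock0 k f E) (hy : y ∈ cube k E) (hxy : OrdEquiv x y) : f y = f x := by
  obtain ⟨hxE, hfx⟩ := hx
  refine (hrr x hxE).elim (fun h => (h y hy hxy).1) fun h => ?_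
  have := h x hxE (.refl x)
  have := Nat.sInf_le (minT_mem hk hxE)
  omega

/-- On `E^k_0` the value of `f` only depends on the order type. -/
lemma exists_delta0_subset_range (hrr : RegressivelyRegular f E) (hk : 0 < k) :
    ∃ g : (Fin k → Fin k) → ℤ, Delta0 k f E ⊆ Set.range g := by
  classical
  refine ⟨fun σ => if h : ∃ x ∈ Eblock0 k f E, orderType x = σ then
    (f h.choose : ℤ) - (sInf (E : Set ℕ) : ℕ) else 0, ?_⟩
  rintro z ⟨x, hx, rfl⟩
  have h : ∃ y ∈ Eblock0 k f E, orderType y = orderType x := ⟨x, hx, rfl⟩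
  obtain ⟨hy, hyx⟩ := h.choose_spec
  refine ⟨orderType x, ?_⟩
  simp only [dif_pos h, hrr.apply_eq_of_ordEquiv hk hy hx.1 (ordEquiv_of_orderType_eq hyx)]

lemma finite_delta0 (hrr : RegressivelyRegular f E) (hk : 0 < k) : (Delta0 k f E).Finite :=
  let ⟨g, hg⟩ := hrr.exists_delta0_subset_range hk
  (Set.finite_range g).subset hg

lemma ncard_delta0_le (hrr : RegressivelyRegular f E) (hk : 0 < k) :
    (Delta0 k f E).ncard ≤ k ^ k := by
  obtain ⟨g, hg⟩ := hrr.exists_delta0_subset_range hk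
  calc (Delta0 k f E).ncard ≤ (Set.range g).ncard := Set.ncard_le_ncard hg (Set.finite_range g)
    _ = Nat.card (Set.range g) := (Nat.card_coe_set_eq _).symm
    _ ≤ Nat.card (Fin k → Fin k) := Finite.card_range_le g
    _ = k ^ k := by simp

end RegressivelyRegular

lemma neg_le_and_neg_of_mem_delta0 {k : ℕ} {f : (Fin k → ℕ) → ℕ} {E : Finset ℕ} {z : ℤ}
    (hz : z ∈ Delta0 k f E) : -((sInf (E : Set ℕ) : ℕ) : ℤ) ≤ z ∧ z < 0 := by
  obtain ⟨x, ⟨-, hx⟩, rfl⟩ := hz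
  omega

lemma pos_of_mem_delta2 {k : ℕ} {f ρ : (Fin k → ℕ) → ℕ} {E : Finset ℕ}
    (hρ : ∀ x ∈ Eblock2 k f E, minT x < ρ x) {z : ℤ} (hz : z ∈ Delta2 k ρ f E) : 0 < z := by
  obtain ⟨x, hx, rfl⟩ := hz
  have := hρ x hx
  omega

/-- The set counted in `TLogBounded`. -/
def smallGaps (k : ℕ) (E : Finset ℕ) (ρ : (Fin k → ℕ) → ℕ) : Set ℕ :=
  {d : ℕ | ∃ x ∈ cube k E, ρ x - minT x = d ∧ 0 < d ∧ d < sInf (E : Set ℕ) * k ^ k}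

lemma finite_smallGaps (k : ℕ) (E : Finset ℕ) (ρ : (Fin k → ℕ) → ℕ) :
    (smallGaps k E ρ).Finite :=
  (Set.finite_Iio (sInf (E : Set ℕ) * k ^ k)).subset fun _ ⟨_, _, _, _, hd⟩ => hd

lemma small_delta2_subset_image_smallGaps {k : ℕ} {f ρ : (Fin k → ℕ) → ℕ} {E : Finset ℕ}
    (hρ : ∀ x ∈ Eblock2 k f E, minT x < ρ x) :
    {y ∈ Delta2 k ρ f E | y < ((sInf (E : Set ℕ) : ℕ) : ℤ) * (k : ℤ) ^ k} ⊆
      (Nat.cast : ℕ → ℤ) '' smallGaps k E ρ := by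
  rintro _ ⟨⟨x, hx, rfl⟩, hlt⟩
  have := hρ x hx
  refine ⟨ρ x - minT x, ⟨x, hx.1, rfl, by omega, ?_⟩, by omega⟩
  zify [this.le]
  simpa using hlt

lemma two_pow_le_pow_of_le_mul_logb {n t q : ℕ} (hq : 0 < q)
    (h : (n : ℝ) ≤ t * Real.logb 2 q) : 2 ^ n ≤ q ^ t := by
  have hq' : (0 : ℝ) < q := by exact_mod_cast hq
  suffices (2 : ℝ) ^ n ≤ (q : ℝ) ^ t by exact_mod_cast this
  calc (2 : ℝ) ^ n = 2 ^ (n : ℝ) := (Real.rpow_natCast 2 n).symm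
    _ ≤ 2 ^ (t * Real.logb 2 q) := Real.rpow_le_rpow_of_exponent_le one_le_two h
    _ = (q : ℝ) ^ t := by
      rw [mul_comm, Real.rpow_mul zero_le_two, Real.rpow_logb two_pos (by norm_num) hq',
        Real.rpow_natCast]

lemma Set.Finite.card_finset_subset {α : Type*} {s : Set α} (hs : s.Finite) :
    Nat.card {A : Finset α // ↑A ⊆ s} = 2 ^ s.ncard := by
  rw [Set.ncard_eq_toFinset_card s hs, ← card_powerset, ← Nat.card_eq_finsetCard]
  exact Nat.card_congr (Equiv.subtypeEquivRight fun A => by simp)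

lemma Set.Finite.card_finset_subset_prod {α : Type*} {s t : Set α} (hs : s.Finite)
    (ht : t.Finite) :
    Nat.card {P : Finset α × Finset α // ↑P.1 ⊆ s ∧ ↑P.2 ⊆ t} = 2 ^ s.ncard * 2 ^ t.ncard := by
  rw [Nat.card_congr (Equiv.subtypeProdEquivProd (p := fun A : Finset α => ↑A ⊆ s)
    (q := fun B : Finset α => ↑B ⊆ t)), Nat.card_prod, hs.card_finset_subset,
    ht.card_finset_subset]

lemma neg_mul_lt_sum_of_card_le {A : Finset ℤ} {e : ℤ} {N : ℕ} (he : 0 < e) (hN : 2 ≤ N)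
    (hA : ∀ a ∈ A, -e ≤ a) (hcard : #A ≤ N) : -(e * N) < ∑ a ∈ A, a := by
  have hconst : #A • (-e) ≤ ∑ a ∈ A, a := card_nsmul_le_sum A id (-e) hA
  rw [nsmul_eq_mul] at hconst
  rcases hcard.lt_or_eq with hlt | rfl
  · have : (#A : ℤ) < N := by exact_mod_cast hlt
    nlinarith
  -- `A` has two distinct elements, so not all of them are `-e`.
  obtain ⟨a, ha, b, hb, hab⟩ := one_lt_card.1 (by omega : 1 < #A)
  have hgt : ∃ c ∈ A, -e < c := by
    by_cases h : a = -e
    · exact ⟨b, hb, (hA b hb).lt_of_ne (h ▸ hab)⟩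
    · exact ⟨a, ha, (hA a ha).lt_of_ne (Ne.symm h)⟩
  have := sum_lt_sum hA hgt
  rw [sum_const, nsmul_eq_mul] at this
  linarith

lemma lt_of_mem_of_sum_add_sum_eq_zero {A' B' : Finset ℤ} {e : ℤ} {N : ℕ} (hN : 2 ≤ N)
    (hA' : ∀ a ∈ A', -e ≤ a ∧ a < 0) (hB' : ∀ b ∈ B', 0 < b) (hcard : #A' ≤ N)
    (hsum : (∑ a ∈ A', a) + ∑ b ∈ B', b = 0) {b : ℤ} (hb : b ∈ B') : b < e * N := by
  have hb_le : b ≤ ∑ b ∈ B', b := single_le_sum (fun i hi => (hB' i hi).le) hb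
  rcases A'.eq_empty_or_nonempty with rfl | ⟨a, ha⟩
  · have := hB' b hb
    simp only [sum_empty, zero_add] at hsum
    omega
  have he : 0 < e := by linarith [hA' a ha]
  linarith [neg_mul_lt_sum_of_card_le he hN (fun a ha => (hA' a ha).1) hcard]

/-- Split a zero-sum set into its negative and positive parts: the negative part sums to more
than `-e * N`, and this bounds every positive element. -/
theorem exists_zero_sum_iff {A B : Set ℤ} {e : ℤ} {N : ℕ} (hN : 2 ≤ N)
    (hA : ∀ a ∈ A, -e ≤ a ∧ a < 0) (hB : ∀ b ∈ B, 0 < b) (hAfin : A.Finite)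
    (hAcard : A.ncard ≤ N) :
    (∃ C : Finset ℤ, C.Nonempty ∧ ↑C ⊆ A ∪ B ∧ ∑ c ∈ C, c = 0) ↔
      ∃ A' B' : Finset ℤ, ↑A' ⊆ A ∧ ↑B' ⊆ {y ∈ B | y < e * N} ∧
        (A'.Nonempty ∨ B'.Nonempty) ∧ (∑ a ∈ A', a) + ∑ b ∈ B', b = 0 := by
  constructor
  · rintro ⟨C, ⟨c, hc⟩, hCAB, hC0⟩
    have hneg : ↑(C.filter (· < 0)) ⊆ A := fun a ha => by
      rw [coe_filter] at ha
      exact (hCAB ha.1).resolve_right fun hb => (hB a hb).asymm ha.2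
    have hpos : ↑(C.filter (¬ · < 0)) ⊆ B := fun b hb => by
      rw [coe_filter] at hb
      exact (hCAB hb.1).resolve_left fun ha => hb.2 (hA b ha).2
    have hsum : (∑ a ∈ C.filter (· < 0), a) + ∑ b ∈ C.filter (¬ · < 0), b = 0 := by
      rw [sum_filter_add_sum_filter_not, hC0]
    have hcard : #(C.filter (· < 0)) ≤ N :=
      (Set.ncard_coe_finset _).symm.trans_le ((Set.ncard_le_ncard hneg hAfin).trans hAcard)
    refine ⟨_, _, hneg, fun b hb => ⟨hpos hb, ?_⟩, ?_, hsum⟩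
    · exact lt_of_mem_of_sum_add_sum_eq_zero hN (fun a ha => hA a (hneg ha))
        (fun b hb => hB b (hpos hb)) hcard hsum hb
    · by_cases hc0 : c < 0
      · exact .inl ⟨c, mem_filter.2 ⟨hc, hc0⟩⟩
      · exact .inr ⟨c, mem_filter.2 ⟨hc, hc0⟩⟩
  · rintro ⟨A', B', hA', hB', hne, hsum⟩
    have hdisj : Disjoint A' B' :=
      disjoint_left.2 fun a ha hb => (hA a (hA' ha)).2.asymm (hB a (hB' hb).1)
    refine ⟨A' ∪ B', ?_, ?_, by rw [sum_union hdisj, hsum]⟩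
    · exact hne.elim (·.mono subset_union_left) (·.mono subset_union_right)
    · rw [coe_union]
      exact Set.union_subset_union hA' (hB'.trans (Set.sep_subset _ _))

theorem subset_sum_core_general (t k p : ℕ) (hk : 2 ≤ k)
    (E : Finset ℕ) (hp : E.card = p) (hp2 : 2 ≤ p)
    (e₀ : ℕ) (he₀ : e₀ = sInf (E : Set ℕ))
    (f : (Fin k → ℕ) → ℕ)
    (hrr : RegressivelyRegular f E)
    (γ : (Fin k → ℕ) → ℤ)
    (ρ : (Fin k → ℕ) → ℕ)
    (hρ2 : ∀ x ∈ Eblock2 k f E, minT x < ρ x)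
    (htlog : TLogBounded t k E ρ)
    (H : Set ℤ) (hH : H = Delta0 k f E ∪ Delta1 k γ f E ∪ Delta2 k ρ f E) :
    Delta1 k γ f E = ∅ ∧
    ((∃ C : Finset ℤ, C.Nonempty ∧ ↑C ⊆ H ∧ ∑ c ∈ C, c = 0) ↔
      (∃ A' B' : Finset ℤ, ↑A' ⊆ Delta0 k f E ∧
        ↑B' ⊆ {y ∈ Delta2 k ρ f E | y < (e₀ : ℤ) * (k : ℤ) ^ k} ∧
        (A'.Nonempty ∨ B'.Nonempty) ∧ (∑ a ∈ A', a) + ∑ b ∈ B', b = 0)) ∧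
    Nat.card {P : Finset ℤ × Finset ℤ // ↑P.1 ⊆ Delta0 k f E ∧
        ↑P.2 ⊆ {y ∈ Delta2 k ρ f E | y < (e₀ : ℤ) * (k : ℤ) ^ k}} ≤
      2 ^ (k ^ k) * (p ^ k) ^ t := by
  subst he₀ hp
  have hk0 : 0 < k := by omega
  have hfin0 := hrr.finite_delta0 hk0
  have hcard0 := hrr.ncard_delta0_le hk0
  have hsmall := small_delta2_subset_image_smallGaps hρ2
  have hgaps := (finite_smallGaps k E ρ).image ((↑) : ℕ → ℤ)
  have hfin2 := hgaps.subset hsmall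
  have hcard2 : 2 ^ (Set.ncard {y ∈ Delta2 k ρ f E | y < ((sInf (E : Set ℕ) : ℕ) : ℤ) *
      (k : ℤ) ^ k}) ≤ (#E ^ k) ^ t := by
    refine two_pow_le_pow_of_le_mul_logb (pow_pos (by omega) k) ?_
    have := (Set.ncard_le_ncard hsmall hgaps).trans_eq
      (Set.ncard_image_of_injective _ Nat.cast_injective)
    push_cast
    exact (Nat.cast_le.2 this).trans htlog
  refine ⟨hrr.delta1_eq_empty γ, ?_, ?_⟩
  · rw [hH, hrr.delta1_eq_empty γ, Set.union_empty]
    have hkk : 2 ≤ k ^ k := hk.trans (Nat.le_self_pow hk0.ne' k)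
    simpa using exists_zero_sum_iff hkk (fun _ ha => neg_le_and_neg_of_mem_delta0 ha)
      (fun _ hb => pos_of_mem_delta2 hρ2 hb) hfin0 hcard0
  · rw [hfin0.card_finset_subset_prod hfin2]
    exact Nat.mul_le_mul (Nat.pow_le_pow_right two_pos hcard0) hcard2

/-- ZFC-provable core of Theorem 3.5: with
`H_p = Δ[f]E^k_0 ∪ Δ[f]E^k_1 ∪ Δ[f]E^k_2`:
(i) `Δ[f]E^k_1 = ∅`;
(ii) `H_p` has a nonempty subset summing to `0` iff some pair `(A', B')`, not both empty,
with `A' ⊆ Δ[f]E^k_0` and `B' ⊆ {y ∈ Δ[f]E^k_2 : y < e₀·k^k}`, has `∑A' + ∑B' = 0`;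
(iii) the number of such pairs `(A', B')` is at most `2^{k^k} · (p^k)^t`. -/
theorem subset_sum_core (t k p : ℕ) (ht : 1 ≤ t) (hk : 2 ≤ k)
    (E : Finset ℕ) (hp : E.card = p) (hp2 : 2 ≤ p)
    (e₀ : ℕ) (he₀ : e₀ = sInf (E : Set ℕ))
    (D : Set (Fin k → ℕ)) (f : (Fin k → ℕ) → ℕ) (hED : cube k E ⊆ D)
    (hrr : RegressivelyRegular f E)
    (γ : (Fin k → ℕ) → ℤ)
    (ρ : (Fin k → ℕ) → ℕ) (hρ : ∀ x ∈ cube k E, minT x ≤ ρ x)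
    (hρ2 : ∀ x ∈ Eblock2 k f E, minT x < ρ x)
    (htlog : TLogBounded t k E ρ)
    (H : Set ℤ) (hH : H = Delta0 k f E ∪ Delta1 k γ f E ∪ Delta2 k ρ f E) :
    Delta1 k γ f E = ∅ ∧
    ((∃ C : Finset ℤ, C.Nonempty ∧ ↑C ⊆ H ∧ ∑ c ∈ C, c = 0) ↔
      (∃ A' B' : Finset ℤ, ↑A' ⊆ Delta0 k f E ∧
        ↑B' ⊆ {y ∈ Delta2 k ρ f E | y < (e₀ : ℤ) * (k : ℤ) ^ k} ∧
        (A'.Nonempty ∨ B'.Nonempty) ∧ (∑ a ∈ A', a) + ∑ b ∈ B', b = 0)) ∧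
    Nat.card {P : Finset ℤ × Finset ℤ // ↑P.1 ⊆ Delta0 k f E ∧
        ↑P.2 ⊆ {y ∈ Delta2 k ρ f E | y < (e₀ : ℤ) * (k : ℤ) ^ k}} ≤
      2 ^ (k ^ k) * (p ^ k) ^ t :=
  subset_sum_core_general t k p hk E hp hp2 e₀ he₀ f hrr γ ρ hρ2 htlog H hH
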